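/- arXiv:2001.00165 — 2 statements merged into one kernel-verified Lean document; each statement's English description precedes it below -/
import Mathlib

section
/- Let k be a field and let f ∈ k[[x,y,z]] be a nonzero formal power series such that in_{(6,4,3)}f = x² + y³. Then ord_{(9,6,4)}f = 18 and in_{(9,6,4)}f = x² + y³ + a·yz³ for some a ∈ k. -/
open MvPowerSeries

/-- The order of a multivariate power series `f` with respect to the weight vector `w`:
the minimum of `w · m` over the support of `f` (and `0` for `f = 0`, by `sInf ∅ = 0`). -/
noncomputable def wOrd {k : Type*} [Field k] (w : Fin 3 → ℕ)
    (f : MvPowerSeries (Fin 3) k) : ℕ :=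
  sInf {n | ∃ m : Fin 3 →₀ ℕ, MvPowerSeries.coeff m f ≠ 0 ∧ ∑ i, w i * m i = n}

/-- The initial term of `f` with respect to the weight vector `w`: the sum of the terms
of `f` whose exponent `m` satisfies `w · m = wOrd w f`. -/
noncomputable def wIn {k : Type*} [Field k] (w : Fin 3 → ℕ)
    (f : MvPowerSeries (Fin 3) k) : MvPowerSeries (Fin 3) k :=
  fun m => if (∑ i, w i * m i) = wOrd w f then MvPowerSeries.coeff m f else 0

/-!
By hypothesis `f` agrees with `x² + y³` on every monomial of `(6,4,3)`-weight at most `12`. Every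
monomial of `(9,6,4)`-weight at most `18` has `(6,4,3)`-weight at most `12`, except `y z³` (of
weights `18` and `13`). So up to `(9,6,4)`-weight `18`, `f` agrees with `x² + y³ + a y z³`, where
`a` is the coefficient of `y z³` in `f`; as this polynomial is nonzero and `(9,6,4)`-homogeneous
of degree `18`, it is the initial term and `18` is the order.
-/

section WeightedInitialTerm

variable {k : Type*} [Field k] {w : Fin 3 → ℕ} {f g : MvPowerSeries (Fin 3) k} {d : ℕ}

def IsWHomogeneous (w : Fin 3 → ℕ) (d : ℕ) (g : MvPowerSeries (Fin 3) k) : Prop :=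
  ∀ m, coeff m g ≠ 0 → ∑ i, w i * m i = d

theorem coeff_wIn (m : Fin 3 →₀ ℕ) :
    coeff m (wIn w f) = if ∑ i, w i * m i = wOrd w f then coeff m f else 0 :=
  rfl

theorem wOrd_le_of_coeff_ne_zero {m : Fin 3 →₀ ℕ} (h : coeff m f ≠ 0) :
    wOrd w f ≤ ∑ i, w i * m i :=
  Nat.sInf_le ⟨m, h, rfl⟩

theorem coeff_eq_zero_of_lt_wOrd {m : Fin 3 →₀ ℕ} (h : ∑ i, w i * m i < wOrd w f) :
    coeff m f = 0 :=
  not_not.mp fun hm => (wOrd_le_of_coeff_ne_zero hm).not_gt h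

theorem isWHomogeneous_monomial (m : Fin 3 →₀ ℕ) (a : k) (hm : ∑ i, w i * m i = d) :
    IsWHomogeneous w d (monomial m a) := by
  classical
  intro n hn
  rw [coeff_monomial] at hn
  split_ifs at hn with h
  · exact h ▸ hm
  · exact absurd rfl hn

theorem IsWHomogeneous.coeff_eq_zero (hg : IsWHomogeneous w d g) {m : Fin 3 →₀ ℕ}
    (hm : ∑ i, w i * m i ≠ d) : coeff m g = 0 :=
  not_not.mp fun h => hm (hg m h)

theorem IsWHomogeneous.add (hf : IsWHomogeneous w d f) (hg : IsWHomogeneous w d g) :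
    IsWHomogeneous w d (f + g) := fun m hm => by
  by_cases hfm : coeff m f = 0
  · exact hg m (by simpa [hfm] using hm)
  · exact hf m hfm

theorem exists_coeff_ne_zero_wOrd (hf : f ≠ 0) :
    ∃ m, coeff m f ≠ 0 ∧ ∑ i, w i * m i = wOrd w f := by
  obtain ⟨m, hm⟩ := (ne_zero_iff_exists_coeff_ne_zero f).mp hf
  exact Nat.sInf_mem (s := {n | ∃ m, coeff m f ≠ 0 ∧ ∑ i, w i * m i = n}) ⟨_, m, hm, rfl⟩

theorem weight_eq_wOrd_of_coeff_wIn_ne_zero {m : Fin 3 →₀ ℕ} (h : coeff m (wIn w f) ≠ 0) :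
    ∑ i, w i * m i = wOrd w f := by
  rw [coeff_wIn] at h
  exact not_not.mp fun hw => h (if_neg hw)

theorem wOrd_eq_of_coeff_eq (hg : IsWHomogeneous w d g) (hg0 : g ≠ 0)
    (hfg : ∀ m, ∑ i, w i * m i ≤ d → coeff m f = coeff m g) : wOrd w f = d := by
  obtain ⟨m₀, hm₀⟩ := (ne_zero_iff_exists_coeff_ne_zero g).mp hg0
  have hd : ∑ i, w i * m₀ i = d := hg m₀ hm₀
  have hfm₀ : coeff m₀ f ≠ 0 := hfg m₀ hd.le ▸ hm₀
  have hle : wOrd w f ≤ d := hd ▸ wOrd_le_of_coeff_ne_zero hfm₀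
  obtain ⟨m, hm, hw⟩ := exists_coeff_ne_zero_wOrd (w := w)
    ((ne_zero_iff_exists_coeff_ne_zero f).mpr ⟨m₀, hfm₀⟩)
  rw [← hw, hg m (hfg m (hw ▸ hle) ▸ hm)]

theorem wIn_eq_of_coeff_eq (hg : IsWHomogeneous w d g) (hg0 : g ≠ 0)
    (hfg : ∀ m, ∑ i, w i * m i ≤ d → coeff m f = coeff m g) : wIn w f = g := by
  ext m
  rw [coeff_wIn, wOrd_eq_of_coeff_eq hg hg0 hfg]
  split_ifs with hm
  · exact hfg m hm.le
  · exact (hg.coeff_eq_zero hm).symm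

theorem coeff_eq_of_wIn_eq (hg : IsWHomogeneous w d g) (hg0 : g ≠ 0) (h : wIn w f = g)
    (m : Fin 3 →₀ ℕ) (hm : ∑ i, w i * m i ≤ d) : coeff m f = coeff m g := by
  obtain ⟨m₀, hm₀⟩ := (ne_zero_iff_exists_coeff_ne_zero g).mp hg0
  have hord : wOrd w f = d :=
    (weight_eq_wOrd_of_coeff_wIn_ne_zero (h ▸ hm₀)).symm.trans (hg m₀ hm₀)
  rcases hm.lt_or_eq with hlt | heq
  · rw [coeff_eq_zero_of_lt_wOrd (hord ▸ hlt)]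
    exact (hg.coeff_eq_zero hlt.ne).symm
  · rw [← h, coeff_wIn, if_pos (heq.trans hord.symm)]

end WeightedInitialTerm

section Cusp

variable {k : Type*} [Field k] {w : Fin 3 → ℕ} {d : ℕ}

theorem sum_vecThree_mul (a b c : ℕ) (m : Fin 3 →₀ ℕ) :
    ∑ i, ![a, b, c] i * m i = a * m 0 + b * m 1 + c * m 2 := by
  simp [Fin.sum_univ_three]

theorem isWHomogeneous_X_sq_add_X_pow_three (h0 : w 0 * 2 = d) (h1 : w 1 * 3 = d) :
    IsWHomogeneous w d (X 0 ^ 2 + X 1 ^ 3 : MvPowerSeries (Fin 3) k) := by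
  rw [X_pow_eq, X_pow_eq]
  exact (isWHomogeneous_monomial _ _ (by simpa [Fin.sum_univ_three] using h0)).add
    (isWHomogeneous_monomial _ _ (by simpa [Fin.sum_univ_three] using h1))

theorem C_mul_X_mul_X_pow_three_eq_monomial (a : k) :
    (C a * X 1 * X 2 ^ 3 : MvPowerSeries (Fin 3) k) =
      monomial (Finsupp.single 1 1 + Finsupp.single 2 3) a := by
  rw [← monomial_zero_eq_C_apply, X, X_pow_eq, monomial_mul_monomial, monomial_mul_monomial,
    zero_add, mul_one, mul_one]

theorem isWHomogeneous_C_mul_X_mul_X_pow_three (a : k) (h : w 1 + w 2 * 3 = d) :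
    IsWHomogeneous w d (C a * X 1 * X 2 ^ 3 : MvPowerSeries (Fin 3) k) := by
  rw [C_mul_X_mul_X_pow_three_eq_monomial]
  exact isWHomogeneous_monomial _ _ (by simpa [Fin.sum_univ_three] using h)

theorem coeff_single_zero_two_X_sq_add_X_pow_three :
    coeff (Finsupp.single 0 2) (X 0 ^ 2 + X 1 ^ 3 : MvPowerSeries (Fin 3) k) = 1 := by
  classical
  rw [X_pow_eq, X_pow_eq, map_add, coeff_monomial, coeff_monomial]
  simp [Finsupp.single_eq_single_iff]

theorem X_sq_add_X_pow_three_ne_zero : (X 0 ^ 2 + X 1 ^ 3 : MvPowerSeries (Fin 3) k) ≠ 0 :=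
  (ne_zero_iff_exists_coeff_ne_zero _).mpr
    ⟨_, by rw [coeff_single_zero_two_X_sq_add_X_pow_three]; exact one_ne_zero⟩

theorem X_sq_add_X_pow_three_add_C_mul_X_mul_X_pow_three_ne_zero (a : k) :
    (X 0 ^ 2 + X 1 ^ 3 + C a * X 1 * X 2 ^ 3 : MvPowerSeries (Fin 3) k) ≠ 0 := by
  refine (ne_zero_iff_exists_coeff_ne_zero _).mpr ⟨Finsupp.single 0 2, ?_⟩
  rw [map_add, coeff_single_zero_two_X_sq_add_X_pow_three,
    (isWHomogeneous_C_mul_X_mul_X_pow_three (w := ![6,4,3]) a rfl).coeff_eq_zero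
      (by simp [Fin.sum_univ_three]), add_zero]
  exact one_ne_zero

theorem weight_le_twelve_or_eq_of_weight_le_eighteen (m : Fin 3 →₀ ℕ)
    (h : 9 * m 0 + 6 * m 1 + 4 * m 2 ≤ 18) :
    6 * m 0 + 4 * m 1 + 3 * m 2 ≤ 12 ∨ m = Finsupp.single 1 1 + Finsupp.single 2 3 := by
  by_cases h12 : 6 * m 0 + 4 * m 1 + 3 * m 2 ≤ 12
  · exact .inl h12
  have h0 : m 0 = 0 := by omega
  have h1 : m 1 = 1 := by omega
  have h2 : m 2 = 3 := by omega
  refine .inr (Finsupp.ext fun i => ?_)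
  fin_cases i <;> simp [h0, h1, h2]

end Cusp

theorem stmt_14_general {k : Type*} [Field k] (f : MvPowerSeries (Fin 3) k)
    (h : wIn ![6,4,3] f = X 0 ^ 2 + X 1 ^ 3) :
    wOrd ![9,6,4] f = 18 ∧
      ∃ a : k, wIn ![9,6,4] f = X 0 ^ 2 + X 1 ^ 3 + (C a : MvPowerSeries (Fin 3) k) * X 1 * X 2 ^ 3 := by
  set yz3 : Fin 3 →₀ ℕ := Finsupp.single 1 1 + Finsupp.single 2 3
  set cusp : MvPowerSeries (Fin 3) k := X 0 ^ 2 + X 1 ^ 3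
  set g : MvPowerSeries (Fin 3) k := cusp + C (coeff yz3 f) * X 1 * X 2 ^ 3
  have hcusp : IsWHomogeneous ![6,4,3] 12 cusp := isWHomogeneous_X_sq_add_X_pow_three rfl rfl
  have hf_cusp : ∀ m, ∑ i, ![6,4,3] i * m i ≤ 12 → coeff m f = coeff m cusp :=
    coeff_eq_of_wIn_eq hcusp X_sq_add_X_pow_three_ne_zero h
  have hg : IsWHomogeneous ![9,6,4] 18 g :=
    (isWHomogeneous_X_sq_add_X_pow_three rfl rfl).add
      (isWHomogeneous_C_mul_X_mul_X_pow_three _ rfl)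
  have hg0 : g ≠ 0 := X_sq_add_X_pow_three_add_C_mul_X_mul_X_pow_three_ne_zero _
  have hfg : ∀ m, ∑ i, ![9,6,4] i * m i ≤ 18 → coeff m f = coeff m g := by
    intro m hm
    rw [sum_vecThree_mul] at hm
    rcases weight_le_twelve_or_eq_of_weight_le_eighteen m hm with hle | rfl
    · rw [map_add, (isWHomogeneous_C_mul_X_mul_X_pow_three (w := ![6,4,3]) _ rfl).coeff_eq_zero
        (by simp [Fin.sum_univ_three]; omega), add_zero]
      exact hf_cusp m (by rwa [sum_vecThree_mul])
    · rw [map_add, hcusp.coeff_eq_zero (by simp [Fin.sum_univ_three]),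
        C_mul_X_mul_X_pow_three_eq_monomial, coeff_monomial_same, zero_add]
  exact ⟨wOrd_eq_of_coeff_eq hg hg0 hfg, _, wIn_eq_of_coeff_eq hg hg0 hfg⟩

theorem stmt_14 {k : Type*} [Field k] (f : MvPowerSeries (Fin 3) k) (hf : f ≠ 0)
    (h : wIn ![6,4,3] f = X 0 ^ 2 + X 1 ^ 3) :
    wOrd ![9,6,4] f = 18 ∧
      ∃ a : k, wIn ![9,6,4] f = X 0 ^ 2 + X 1 ^ 3 + (C a : MvPowerSeries (Fin 3) k) * X 1 * X 2 ^ 3 :=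
  stmt_14_general f h
end

section
/- Let k be a field and let f ∈ k[[x,y,z]] be a nonzero formal power series such that in_{(9,6,4)}f = x² + y³. Then ord_{(15,10,6)}f = 30 and in_{(15,10,6)}f = x² + y³ + a·z⁵ for some a ∈ k. -/
open MvPowerSeries

/-! Write `f = g + r` with `g = x² + y³`, the `(9,6,4)`-initial form of `f`, so that every monomial
of `r` has `(9,6,4)`-weight at least `19`. Such a monomial `xᵃyᵇzᶜ` has `(15,10,6)`-weight at least
`30`, with equality only for `z⁵`. As `g` is `(15,10,6)`-homogeneous of weight `30`, the
`(15,10,6)`-initial form of `f` is `g` plus the `z⁵`-term of `r`. -/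

open Finsupp

namespace MvPowerSeries

variable {σ R : Type*} [CommSemiring R] {w : σ → ℕ}

theorem isWeightedHomogeneous_X_pow (i : σ) {n p : ℕ} (hp : n * w i = p) :
    (X i ^ n : MvPowerSeries σ R).IsWeightedHomogeneous w p := fun {d} hd ↦ by
  classical
  rw [coeff_X_pow] at hd
  split_ifs at hd with h
  · rw [h, weight_single, smul_eq_mul, hp]
  · exact absurd rfl hd

theorem IsWeightedHomogeneous.le_weightedOrder {f : MvPowerSeries σ R} {n : ℕ}
    (hf : f.IsWeightedHomogeneous w n) : (n : ℕ∞) ≤ f.weightedOrder w :=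
  MvPowerSeries.le_weightedOrder w fun _ hd ↦ hf.coeff_eq_zero (by exact_mod_cast hd.ne)

theorem weightedOrder_eq_of_le_of_weightedHomogeneousComponent_ne_zero
    {f : MvPowerSeries σ R} {n : ℕ} (hle : (n : ℕ∞) ≤ f.weightedOrder w)
    (hne : weightedHomogeneousComponent w n f ≠ 0) : f.weightedOrder w = n :=
  le_antisymm (not_lt.mp (mt weightedHomogeneousComponent_of_lt_weightedOrder_eq_zero hne)) hle

theorem lt_weightedOrder_sub_weightedHomogeneousComponent {R : Type*} [CommRing R]
    {f : MvPowerSeries σ R} {n : ℕ} (hn : f.weightedOrder w = n) :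
    (n : ℕ∞) < (f - weightedHomogeneousComponent w n f).weightedOrder w := by
  rw [← ENat.add_one_le_iff (ENat.natCast_ne_top n), ← Nat.cast_add_one]
  refine nat_le_weightedOrder w fun d hd ↦ ?_
  rw [map_sub, coeff_weightedHomogeneousComponent]
  split_ifs with hdn
  · exact sub_self _
  · have hlt : weight w d < n := by omega
    rw [coeff_eq_zero_of_lt_weightedOrder w (by rw [hn]; exact_mod_cast hlt), sub_zero]

end MvPowerSeries

open MvPowerSeries

theorem Finsupp.weight_eq_sum_mul {σ : Type*} [Fintype σ] (w : σ → ℕ) (m : σ →₀ ℕ) :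
    weight w m = ∑ i, w i * m i := by
  simp [weight_eq_sum, mul_comm]

section WeightedInitialForm

variable {k : Type*} [Field k] (w : Fin 3 → ℕ) (f : MvPowerSeries (Fin 3) k)

theorem wIn_eq_weightedHomogeneousComponent :
    wIn w f = weightedHomogeneousComponent w (wOrd w f) f := by
  ext m
  simp only [coeff_weightedHomogeneousComponent, weight_eq_sum_mul]
  rfl

theorem isWeightedHomogeneous_wIn : (wIn w f).IsWeightedHomogeneous w (wOrd w f) := by
  rw [wIn_eq_weightedHomogeneousComponent]
  exact isWeightedHomogeneous_weightedHomogeneousComponent w f _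

theorem wOrd_eq_weightedOrder (hf : f ≠ 0) : (wOrd w f : ℕ∞) = f.weightedOrder w := by
  obtain ⟨m, hm⟩ := (ne_zero_iff_exists_coeff_ne_zero f).mp hf
  obtain ⟨d, hd, hdw⟩ := Nat.sInf_mem (⟨_, m, hm, rfl⟩ : {n | ∃ m : Fin 3 →₀ ℕ,
    coeff m f ≠ 0 ∧ ∑ i, w i * m i = n}.Nonempty)
  refine le_antisymm (nat_le_weightedOrder w fun d hlt ↦ ?_) ?_
  · by_contra hne
    rw [weight_eq_sum_mul] at hlt
    exact Nat.notMem_of_lt_sInf hlt ⟨d, hne, rfl⟩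
  · calc f.weightedOrder w ≤ weight w d := weightedOrder_le w hd
      _ = wOrd w f := by rw [weight_eq_sum_mul, hdw]; rfl

end WeightedInitialForm

section Weights15106

variable {R : Type*} [CommSemiring R]

theorem weight_964_le_or_eq_single_of_weight_15106_le (d : Fin 3 →₀ ℕ)
    (hd : weight ![15, 10, 6] d ≤ 30) : weight ![9, 6, 4] d ≤ 18 ∨ d = single 2 5 := by
  simp only [weight_eq_sum_mul, Fin.sum_univ_three, Matrix.cons_val_zero, Matrix.cons_val_one,
    Matrix.cons_val_two, Matrix.head_cons, Matrix.tail_cons] at hd ⊢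
  refine or_iff_not_imp_left.mpr fun h ↦ ?_
  have h0 : d 0 = 0 := by omega
  have h1 : d 1 = 0 := by omega
  ext i
  fin_cases i <;> simp <;> omega

theorem le_weightedOrder_15106_of_lt_weightedOrder_964 {g : MvPowerSeries (Fin 3) R}
    (hg : 18 < g.weightedOrder ![9, 6, 4]) : 30 ≤ g.weightedOrder ![15, 10, 6] := by
  refine nat_le_weightedOrder _ fun d hd ↦ ?_
  obtain hle | rfl := weight_964_le_or_eq_single_of_weight_15106_le d hd.le
  · exact coeff_eq_zero_of_lt_weightedOrder _ (lt_of_le_of_lt (by exact_mod_cast hle) hg)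
  · simp [weight_single] at hd

theorem weightedHomogeneousComponent_15106_of_lt_weightedOrder_964 {g : MvPowerSeries (Fin 3) R}
    (hg : 18 < g.weightedOrder ![9, 6, 4]) :
    weightedHomogeneousComponent ![15, 10, 6] 30 g = C (coeff (single 2 5) g) * X 2 ^ 5 := by
  ext d
  rw [coeff_weightedHomogeneousComponent, coeff_C_mul, coeff_X_pow]
  split_ifs with hd hz hz
  · simp [hz]
  · obtain hle | rfl := weight_964_le_or_eq_single_of_weight_15106_le d hd.le
    · rw [coeff_eq_zero_of_lt_weightedOrder _ (lt_of_le_of_lt (by exact_mod_cast hle) hg),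
        mul_zero]
    · exact absurd rfl hz
  · simp [hz, weight_single] at hd
  · rw [mul_zero]

end Weights15106

theorem stmt_15 {k : Type*} [Field k] (f : MvPowerSeries (Fin 3) k) (hf : f ≠ 0)
    (h : wIn ![9,6,4] f = X 0 ^ 2 + X 1 ^ 3) :
    wOrd ![15,10,6] f = 30 ∧
      ∃ a : k, wIn ![15,10,6] f = X 0 ^ 2 + X 1 ^ 3 + C (σ := Fin 3) (R := k) a * X 2 ^ 5 := by
  set g : MvPowerSeries (Fin 3) k := X 0 ^ 2 + X 1 ^ 3
  have hgW : g.IsWeightedHomogeneous ![15, 10, 6] 30 :=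
    IsWeightedHomogeneous.add (isWeightedHomogeneous_X_pow (0 : Fin 3) (n := 2) (by decide))
      (isWeightedHomogeneous_X_pow (1 : Fin 3) (n := 3) (by decide))
  have hcoeff : coeff (single 0 2) g = 1 := by simp [g, coeff_X_pow, single_eq_single_iff]
  have hord18 : wOrd ![9, 6, 4] f = 18 := by
    have := isWeightedHomogeneous_wIn ![9, 6, 4] f (d := single 0 2) (by rw [h, hcoeff]; simp)
    simpa [weight_single] using this.symm
  have hrest : 18 < (f - g).weightedOrder ![9, 6, 4] := by
    have hcomp18 : weightedHomogeneousComponent ![9, 6, 4] 18 f = g := by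
      rw [← hord18, ← wIn_eq_weightedHomogeneousComponent, h]
    simpa [hcomp18] using lt_weightedOrder_sub_weightedHomogeneousComponent
      ((wOrd_eq_weightedOrder _ f hf).symm.trans (congrArg _ hord18))
  set a := coeff (single 2 5) (f - g)
  have hcomp : weightedHomogeneousComponent ![15, 10, 6] 30 f = g + C a * X 2 ^ 5 := by
    rw [← add_sub_cancel g f, map_add,
      ← isWeightedHomogeneous_iff_eq_weightedHomogeneousComponent.mp hgW,
      weightedHomogeneousComponent_15106_of_lt_weightedOrder_964 hrest]
  have hord30 : wOrd ![15, 10, 6] f = 30 := by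
    refine Nat.cast_injective ((wOrd_eq_weightedOrder _ f hf).trans ?_)
    refine weightedOrder_eq_of_le_of_weightedHomogeneousComponent_ne_zero ?_ ?_
    · rw [← add_sub_cancel g f]
      exact le_trans (le_min hgW.le_weightedOrder
        (le_weightedOrder_15106_of_lt_weightedOrder_964 hrest)) (min_weightedOrder_le_add _)
    · rw [hcomp]
      refine fun h0 ↦ absurd (congrArg (coeff (single 0 2)) h0) ?_
      simp [hcoeff, coeff_X_pow, single_eq_single_iff]
  exact ⟨hord30, a, by rw [wIn_eq_weightedHomogeneousComponent, hord30, hcomp]⟩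
end
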